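/- arXiv:2309.04927 — 2 statements merged into one kernel-verified Lean document; each statement's English description precedes it below -/
import Mathlib

section
/- Let G be an ample Hausdorff groupoid with compact unit space. Then r_*(π(ℂF(G))) = ℂ·1_{G^{(0)}} = s_*(π(ℂF(G))); that is, the images of π(ℂF(G)) under the range and source sum maps are exactly the complex scalar multiples of the indicator function of the unit space. -/
open scoped Classical

/-- A groupoid encoded as a "groupoid with zero": the partially defined composition is
totalised by declaring non-composable products to be `0`.  The actual groupoid elements are
the nonzero elements; the range and source of a nonzero `a` are `a * a⁻¹` and `a⁻¹ * a`. -/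
class GroupoidZ (G : Type*) extends Mul G, Inv G, Zero G where
  zero_mul' : ∀ a : G, 0 * a = 0
  mul_zero' : ∀ a : G, a * 0 = 0
  inv_zero' : (0 : G)⁻¹ = 0
  inv_inv' : ∀ a : G, a⁻¹⁻¹ = a
  mul_assoc' : ∀ a b c : G, a * b ≠ 0 → b * c ≠ 0 → a * b * c = a * (b * c)
  mul_ne_zero_iff' : ∀ a b : G, a ≠ 0 → b ≠ 0 → (a * b ≠ 0 ↔ a⁻¹ * a = b * b⁻¹)
  mul_inv_self_mul' : ∀ a : G, a * a⁻¹ * a = a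
  mul_inv_rev' : ∀ a b : G, (a * b)⁻¹ = b⁻¹ * a⁻¹

/-- The unit space `G⁰`: the nonzero idempotents. -/
def unitSpace (G : Type*) [GroupoidZ G] : Set G := {e | e ≠ 0 ∧ e * e = e}

/-- A bisection: a set of groupoid elements on which range and source are injective. -/
def IsBisection {G : Type*} [GroupoidZ G] (B : Set G) : Prop :=
  (0 : G) ∉ B ∧ (∀ a ∈ B, ∀ b ∈ B, a * a⁻¹ = b * b⁻¹ → a = b) ∧
    (∀ a ∈ B, ∀ b ∈ B, a⁻¹ * a = b⁻¹ * b → a = b)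

/-- A set is full if its range and source images are the whole unit space. -/
def IsFull {G : Type*} [GroupoidZ G] (B : Set G) : Prop :=
  (fun a => a * a⁻¹) '' B = unitSpace G ∧ (fun a => a⁻¹ * a) '' B = unitSpace G

/-- Compact open bisection. -/
def IsCOB {G : Type*} [GroupoidZ G] [TopologicalSpace G] (B : Set G) : Prop :=
  IsBisection B ∧ IsCompact B ∧ IsOpen B

/-- The product `AB = {αβ : (α,β) composable}` of two subsets of a groupoid. -/
def setMul {G : Type*} [GroupoidZ G] (A B : Set G) : Set G := Set.image2 (· * ·) A B \ {0}

/-- The inverse `B⁻¹ = {γ⁻¹ : γ ∈ B}` of a subset of a groupoid. -/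
def setInv {G : Type*} [GroupoidZ G] (B : Set G) : Set G := Inv.inv '' B

/-- The topological full group `F(G)`: all full compact open bisections. -/
def fullBisections (G : Type*) [GroupoidZ G] [TopologicalSpace G] : Set (Set G) :=
  {B | IsCOB B ∧ IsFull B}

/-- Indicator function `1_B : G → ℂ`. -/
noncomputable def indic {G : Type*} [GroupoidZ G] (B : Set G) : G → ℂ := Set.indicator B 1

/-- Convolution product on functions `G → ℂ`: `(f * g)(γ) = ∑_{αβ = γ} f(α) g(β)`. -/
noncomputable def convol {G : Type*} [GroupoidZ G] (f g : G → ℂ) : G → ℂ := fun γ =>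
  if γ = 0 then 0 else ∑ᶠ p ∈ {p : G × G | p.1 * p.2 = γ}, f p.1 * g p.2

/-- The `*`-involution `f^*(γ) = conj (f (γ⁻¹))`. -/
noncomputable def starF {G : Type*} [GroupoidZ G] (f : G → ℂ) : G → ℂ := fun γ =>
  (starRingEnd ℂ) (f γ⁻¹)

/-- An ample Hausdorff (étale) groupoid: Hausdorff, locally compact, continuous inversion
and (partial) multiplication, the unit space is open and closed, the range map is open,
and there is a basis of compact open bisections.  The adjoined `0` is an isolated point. -/
class AmpleGroupoid (G : Type*) [TopologicalSpace G] extends GroupoidZ G where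
  t2' : T2Space G
  locallyCompact' : LocallyCompactSpace G
  isolated_zero' : IsOpen {(0 : G)}
  continuous_inv' : Continuous (fun a : G => a⁻¹)
  continuousOn_mul' : ContinuousOn (fun p : G × G => p.1 * p.2) {p : G × G | p.1 * p.2 ≠ 0}
  isOpen_unitSpace' : IsOpen (unitSpace G)
  isClosed_unitSpace' : IsClosed (unitSpace G)
  isOpenMap_range' : ∀ B : Set G, IsOpen B → (0 : G) ∉ B → IsOpen ((fun a => a * a⁻¹) '' B)
  ample_basis' : ∀ (a : G) (U : Set G), a ≠ 0 → IsOpen U → a ∈ U →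
    ∃ B : Set G, IsCOB B ∧ a ∈ B ∧ B ⊆ U

/-- The image `π(ℂF(G))` of the representation of the topological full group: the span of
the indicator functions of full compact open bisections. -/
noncomputable def spanFull (G : Type*) [GroupoidZ G] [TopologicalSpace G] :
    Submodule ℂ (G → ℂ) :=
  Submodule.span ℂ {f | ∃ B ∈ fullBisections G, f = indic B}

/-- The Steinberg algebra `A(G)` (as a subspace of `G → ℂ`): the span of the indicator
functions of compact open bisections. -/
noncomputable def steinberg (G : Type*) [GroupoidZ G] [TopologicalSpace G] :
    Submodule ℂ (G → ℂ) :=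
  Submodule.span ℂ {f | ∃ B : Set G, IsCOB B ∧ f = indic B}


section GroupoidLemmas

variable {G : Type*} [GroupoidZ G]

lemma gz_mul_inv_ne_zero {a : G} (ha : a ≠ 0) : a * a⁻¹ ≠ 0 := by
  intro h
  have h2 := GroupoidZ.mul_inv_self_mul' a
  rw [h, GroupoidZ.zero_mul'] at h2
  exact ha h2.symm

lemma gz_inv_ne_zero {a : G} (ha : a ≠ 0) : a⁻¹ ≠ 0 := by
  intro h
  apply ha
  rw [← GroupoidZ.inv_inv' a, h, GroupoidZ.inv_zero']

lemma gz_inv_mul_ne_zero {a : G} (ha : a ≠ 0) : a⁻¹ * a ≠ 0 := by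
  have := gz_mul_inv_ne_zero (gz_inv_ne_zero ha)
  rwa [GroupoidZ.inv_inv'] at this

lemma unit_inv_mul {e : G} (he : e ∈ unitSpace G) : e⁻¹ * e = e := by
  obtain ⟨h0, hee⟩ := he
  have hmul : e * e ≠ 0 := by rw [hee]; exact h0
  have hcomm : e⁻¹ * e = e * e⁻¹ := (GroupoidZ.mul_ne_zero_iff' e e h0 h0).mp hmul
  have hA : e⁻¹ * e * e = e⁻¹ * e := by
    rw [GroupoidZ.mul_assoc' e⁻¹ e e (gz_inv_mul_ne_zero h0) hmul, hee]
  have hB : e⁻¹ * e * e = e := by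
    rw [hcomm]; exact GroupoidZ.mul_inv_self_mul' e
  rw [← hA, hB]

lemma unit_mul_inv {e : G} (he : e ∈ unitSpace G) : e * e⁻¹ = e := by
  have hmul : e * e ≠ 0 := by rw [he.2]; exact he.1
  rw [← (GroupoidZ.mul_ne_zero_iff' e e he.1 he.1).mp hmul, unit_inv_mul he]

end GroupoidLemmas

lemma unitSpace_full {G : Type*} [TopologicalSpace G] [AmpleGroupoid G]
    (hcomp : IsCompact (unitSpace G)) : unitSpace G ∈ fullBisections G := by
  refine ⟨⟨⟨fun h => h.1 rfl, ?_, ?_⟩, hcomp, AmpleGroupoid.isOpen_unitSpace'⟩, ?_, ?_⟩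
  · intro a ha b hb h
    rwa [unit_mul_inv ha, unit_mul_inv hb] at h
  · intro a ha b hb h
    rwa [unit_inv_mul ha, unit_inv_mul hb] at h
  · ext u
    constructor
    · rintro ⟨a, ha, rfl⟩
      show a * a⁻¹ ∈ unitSpace G
      rwa [unit_mul_inv ha]
    · intro hu
      exact ⟨u, hu, unit_mul_inv hu⟩
  · ext u
    constructor
    · rintro ⟨a, ha, rfl⟩
      show a⁻¹ * a ∈ unitSpace G
      rwa [unit_inv_mul ha]
    · intro hu
      exact ⟨u, hu, unit_inv_mul hu⟩

lemma finsum_mem_single_ne {α M : Type*} [AddCommMonoid M] {S : Set α} {f : α → M} {a : α}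
    (ha : a ∈ S) (h : ∀ x ∈ S, f x ≠ 0 → x = a) : ∑ᶠ x ∈ S, f x = f a := by
  by_cases hfa : f a = 0
  · rw [hfa]
    refine finsum_mem_of_eqOn_zero fun x hx => ?_
    by_contra hne
    rw [h x hx hne] at hne
    exact hne hfa
  · have hS : S ∩ Function.support f = {a} := by
      ext x
      constructor
      · rintro ⟨hxS, hxs⟩
        exact Set.mem_singleton_iff.mpr (h x hxS hxs)
      · rintro rfl
        exact ⟨ha, hfa⟩
    rw [← finsum_mem_inter_support, hS, finsum_mem_singleton]

lemma finsum_mem_const_smul' {α : Type*} (a : ℂ) (S : Set α) (f : α → ℂ) :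
    ∑ᶠ x ∈ S, a * f x = a * ∑ᶠ x ∈ S, f x := by
  rw [finsum_mem_def, finsum_mem_def]
  calc (∑ᶠ x, S.indicator (fun y => a * f y) x)
      = ∑ᶠ x, a • S.indicator f x :=
        finsum_congr fun x => by rw [Set.indicator_const_mul]; rfl
    _ = a • ∑ᶠ x, S.indicator f x := (smul_finsum a _).symm
    _ = a * ∑ᶠ x, S.indicator f x := rfl

lemma main_image {G : Type*} [TopologicalSpace G] [AmpleGroupoid G]
    (hU : unitSpace G ∈ fullBisections G)
    (ρ : G → G)
    (hinj : ∀ B ∈ fullBisections G, ∀ a ∈ B, ∀ b ∈ B, ρ a = ρ b → a = b)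
    (hsurj : ∀ B ∈ fullBisections G, ∀ u ∈ unitSpace G, ∃ γ ∈ B, ρ γ = u) :
    (fun f : G → ℂ => Set.indicator (unitSpace G)
        (fun u => ∑ᶠ γ ∈ {γ : G | γ ≠ 0 ∧ ρ γ = u}, f γ)) '' (spanFull G : Set (G → ℂ)) =
      Set.range (fun c : ℂ => c • indic (unitSpace G)) := by
  set T : (G → ℂ) → (G → ℂ) := fun f => Set.indicator (unitSpace G)
      (fun u => ∑ᶠ γ ∈ {γ : G | γ ≠ 0 ∧ ρ γ = u}, f γ) with hT
  have hmemB : ∀ B : Set G, B ∈ fullBisections G → ∀ x : G, indic B x ≠ 0 → x ∈ B := by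
    intro B _ x hx
    by_contra h
    exact hx (Set.indicator_of_notMem h 1)
  have hfin : ∀ B ∈ fullBisections G, ∀ u : G,
      ({γ : G | γ ≠ 0 ∧ ρ γ = u} ∩ Function.support (indic B)).Finite := by
    intro B hB u
    apply Set.Subsingleton.finite
    rintro x ⟨hxS, hxs⟩ y ⟨hyS, hys⟩
    exact hinj B hB x (hmemB B hB x hxs) y (hmemB B hB y hys) (hxS.2.trans hyS.2.symm)
  have hbase : ∀ B ∈ fullBisections G, T (indic B) = indic (unitSpace G) := by
    intro B hB
    funext u
    by_cases hu : u ∈ unitSpace G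
    · rw [hT]
      show Set.indicator _ _ u = indic (unitSpace G) u
      rw [Set.indicator_of_mem hu]
      obtain ⟨γ0, hγ0B, hργ0⟩ := hsurj B hB u hu
      have hγ0ne : γ0 ≠ 0 := fun h => hB.1.1.1 (h ▸ hγ0B)
      have hmem : γ0 ∈ {γ : G | γ ≠ 0 ∧ ρ γ = u} := ⟨hγ0ne, hργ0⟩
      have huniq : ∀ x ∈ {γ : G | γ ≠ 0 ∧ ρ γ = u}, indic B x ≠ 0 → x = γ0 := by
        rintro x ⟨_, hρx⟩ hne
        exact hinj B hB x (hmemB B hB x hne) γ0 hγ0B (hρx.trans hργ0.symm)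
      rw [finsum_mem_single_ne hmem huniq]
      show Set.indicator B 1 γ0 = Set.indicator (unitSpace G) 1 u
      rw [Set.indicator_of_mem hγ0B, Set.indicator_of_mem hu]
      rfl
    · rw [hT]
      show Set.indicator _ _ u = Set.indicator (unitSpace G) 1 u
      rw [Set.indicator_of_notMem hu, Set.indicator_of_notMem hu]
  have hP : ∀ f ∈ spanFull G,
      (∀ u : G, ({γ : G | γ ≠ 0 ∧ ρ γ = u} ∩ Function.support f).Finite) ∧
        ∃ c : ℂ, T f = c • indic (unitSpace G) := by
    intro f hf
    refine Submodule.span_induction ?_ ?_ ?_ ?_ hf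
    · rintro g ⟨B, hB, rfl⟩
      exact ⟨hfin B hB, 1, by rw [hbase B hB, one_smul]⟩
    · refine ⟨fun u => ?_, 0, ?_⟩
      · simp [Function.support_zero]
      · rw [zero_smul]
        funext u
        rw [hT]
        show Set.indicator _ _ u = 0
        by_cases hu : u ∈ unitSpace G
        · rw [Set.indicator_of_mem hu]
          exact finsum_mem_of_eqOn_zero fun _ _ => rfl
        · exact Set.indicator_of_notMem hu _
    · rintro f g _ _ ⟨hf1, c, hf2⟩ ⟨hg1, d, hg2⟩
      constructor
      · intro u
        refine ((hf1 u).union (hg1 u)).subset ?_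
        rintro x ⟨hxS, hxs⟩
        by_cases hfx : f x = 0
        · refine Or.inr ⟨hxS, ?_⟩
          intro hgx
          exact hxs (by show f x + g x = 0; rw [hfx, hgx, add_zero])
        · exact Or.inl ⟨hxS, hfx⟩
      · refine ⟨c + d, ?_⟩
        funext u
        by_cases hu : u ∈ unitSpace G
        · have h1 : T (f + g) u = T f u + T g u := by
            rw [hT]
            show Set.indicator _ _ u = Set.indicator _ _ u + Set.indicator _ _ u
            rw [Set.indicator_of_mem hu, Set.indicator_of_mem hu, Set.indicator_of_mem hu]
            exact finsum_mem_add_distrib' (hf1 u) (hg1 u)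
          rw [h1, hf2, hg2]
          show c • indic (unitSpace G) u + d • indic (unitSpace G) u
              = (c + d) • indic (unitSpace G) u
          rw [← add_smul]
        · rw [hT]
          show Set.indicator _ _ u = ((c + d) • indic (unitSpace G)) u
          rw [Set.indicator_of_notMem hu]
          show (0 : ℂ) = (c + d) • Set.indicator (unitSpace G) 1 u
          rw [Set.indicator_of_notMem hu, smul_zero]
    · rintro a f _ ⟨hf1, c, hf2⟩
      constructor
      · intro u
        refine (hf1 u).subset (Set.inter_subset_inter_right _ ?_)
        intro x hx
        have : a • f x ≠ 0 := hx
        intro hfx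
        exact this (by rw [hfx, smul_zero])
      · refine ⟨a * c, ?_⟩
        funext u
        by_cases hu : u ∈ unitSpace G
        · have h1 : T (a • f) u = a * T f u := by
            rw [hT]
            show Set.indicator _ _ u = a * Set.indicator _ _ u
            rw [Set.indicator_of_mem hu, Set.indicator_of_mem hu]
            have : ∀ γ : G, (a • f) γ = a * f γ := fun γ => rfl
            calc (∑ᶠ γ ∈ {γ : G | γ ≠ 0 ∧ ρ γ = u}, (a • f) γ)
                = ∑ᶠ γ ∈ {γ : G | γ ≠ 0 ∧ ρ γ = u}, a * f γ :=
                  finsum_mem_congr rfl fun γ _ => this γ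
              _ = a * ∑ᶠ γ ∈ {γ : G | γ ≠ 0 ∧ ρ γ = u}, f γ :=
                  finsum_mem_const_smul' a _ f
          rw [h1, hf2]
          show a * (c • indic (unitSpace G) u) = ((a * c) • indic (unitSpace G)) u
          show a * (c * indic (unitSpace G) u) = (a * c) * indic (unitSpace G) u
          ring
        · rw [hT]
          show Set.indicator _ _ u = ((a * c) • indic (unitSpace G)) u
          rw [Set.indicator_of_notMem hu]
          show (0 : ℂ) = (a * c) • Set.indicator (unitSpace G) 1 u
          rw [Set.indicator_of_notMem hu, smul_zero]
  apply Set.Subset.antisymm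
  · rintro _ ⟨f, hf, rfl⟩
    obtain ⟨c, hc⟩ := (hP f hf).2
    exact ⟨c, hc.symm⟩
  · rintro _ ⟨c, rfl⟩
    refine ⟨c • indic (unitSpace G),
      Submodule.smul_mem _ c (Submodule.subset_span ⟨unitSpace G, hU, rfl⟩), ?_⟩
    have h1 : ∀ u : G, ({γ : G | γ ≠ 0 ∧ ρ γ = u} ∩
        Function.support (indic (unitSpace G))).Finite := hfin _ hU
    funext u
    by_cases hu : u ∈ unitSpace G
    · have h2 : T (c • indic (unitSpace G)) u = c * T (indic (unitSpace G)) u := by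
        rw [hT]
        show Set.indicator _ _ u = c * Set.indicator _ _ u
        rw [Set.indicator_of_mem hu, Set.indicator_of_mem hu]
        have hsmul : ∀ γ : G, (c • indic (unitSpace G)) γ = c * indic (unitSpace G) γ :=
          fun γ => rfl
        calc (∑ᶠ γ ∈ {γ : G | γ ≠ 0 ∧ ρ γ = u}, (c • indic (unitSpace G)) γ)
            = ∑ᶠ γ ∈ {γ : G | γ ≠ 0 ∧ ρ γ = u}, c * indic (unitSpace G) γ :=
              finsum_mem_congr rfl fun γ _ => hsmul γ
          _ = c * ∑ᶠ γ ∈ {γ : G | γ ≠ 0 ∧ ρ γ = u}, indic (unitSpace G) γ :=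
              finsum_mem_const_smul' c _ _
      rw [h2, hbase _ hU]
      rfl
    · rw [hT]
      show Set.indicator _ _ u = (c • indic (unitSpace G)) u
      rw [Set.indicator_of_notMem hu]
      show (0 : ℂ) = c • Set.indicator (unitSpace G) 1 u
      rw [Set.indicator_of_notMem hu, smul_zero]


/-- The images of `π(ℂF(G))` under the range and source sum maps `r_*`, `s_*`
are exactly the scalar multiples of the indicator function of the unit space. -/
theorem rStar_sStar_image_of_rep {G : Type*} [TopologicalSpace G] [AmpleGroupoid G]
    (hcomp : IsCompact (unitSpace G)) (hne : ∃ a : G, a ≠ 0) :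
    (fun f : G → ℂ => Set.indicator (unitSpace G)
        (fun u => ∑ᶠ γ ∈ {γ : G | γ ≠ 0 ∧ γ * γ⁻¹ = u}, f γ)) '' (spanFull G : Set (G → ℂ)) =
      Set.range (fun c : ℂ => c • indic (unitSpace G)) ∧
    (fun f : G → ℂ => Set.indicator (unitSpace G)
        (fun u => ∑ᶠ γ ∈ {γ : G | γ ≠ 0 ∧ γ⁻¹ * γ = u}, f γ)) '' (spanFull G : Set (G → ℂ)) =
      Set.range (fun c : ℂ => c • indic (unitSpace G)) := by
  have hU : unitSpace G ∈ fullBisections G := unitSpace_full hcomp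
  constructor
  · exact main_image hU (fun a => a * a⁻¹)
      (fun B hB a ha b hb h => hB.1.1.2.1 a ha b hb h)
      (fun B hB u hu => by
        have h := hB.2.1
        rw [← h] at hu
        obtain ⟨γ, hγ, hγu⟩ := hu
        exact ⟨γ, hγ, hγu⟩)
  · exact main_image hU (fun a => a⁻¹ * a)
      (fun B hB a ha b hb h => hB.1.1.2.2 a ha b hb h)
      (fun B hB u hu => by
        have h := hB.2.2
        rw [← h] at hu
        obtain ⟨γ, hγ, hγu⟩ := hu
        exact ⟨γ, hγ, hγu⟩)
end

section
/- Let G be a discrete groupoid with finite unit space that is not a group (has at least 2 units). Then for every γ ∈ G, the point-mass function 1_γ does not lie in the closure of π(ℂF(G)) in the full groupoid C*-algebra C*(G). Consequently, the closure of π(ℂF(G)) in C*(G) is a proper subalgebra. -/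
open scoped Classical

set_option maxHeartbeats 1000000
set_option synthInstance.maxHeartbeats 1000000

/-- The convolution product on `A(G) = C_c(G)`, the finitely supported functions `G → ℂ`
(non-composable products, i.e. products equal to `0`, do not contribute). -/
noncomputable def convF {G : Type*} [GroupoidZ G] (f g : G →₀ ℂ) : G →₀ ℂ :=
  f.sum fun a ca => g.sum fun b cb =>
    if a * b ≠ 0 then Finsupp.single (a * b) (ca * cb) else 0

/-- The `*`-involution `f^*(γ) = conj (f (γ⁻¹))` on `A(G) = C_c(G)`. -/
noncomputable def starFsupp {G : Type*} [GroupoidZ G] (f : G →₀ ℂ) : G →₀ ℂ :=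
  f.sum fun a ca => Finsupp.single a⁻¹ ((starRingEnd ℂ) ca)

/-- The map `T : A(G) → M_n(ℂ)`, `T(f)_{ij} = ∑_{γ ∈ G^{a_i}_{a_j}} f(γ)`, with rows and
columns indexed by the (finite) unit space. -/
noncomputable def Tmat {G : Type*} [GroupoidZ G] (f : G →₀ ℂ) :
    Matrix (unitSpace G) (unitSpace G) ℂ := fun i j =>
  ∑ γ ∈ f.support, if γ * γ⁻¹ = (i : G) ∧ γ⁻¹ * γ = (j : G) then f γ else 0

/-- The image `π(ℂF(G))` of the representation of the topological full group in
`A(G) = C_c(G)`: the span of the indicator functions of full bisections.  (For a discrete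
groupoid with finite unit space, every full bisection is finite, and the full compact open
bisections are exactly the full finite bisections.) -/
noncomputable def spanFullD (G : Type*) [GroupoidZ G] : Submodule ℂ (G →₀ ℂ) :=
  Submodule.span ℂ {f | ∃ B : Finset G, IsBisection (B : Set G) ∧ IsFull (B : Set G) ∧
    f = ∑ γ ∈ B, Finsupp.single γ (1 : ℂ)}

/-- A C*-seminorm on the convolution `*`-algebra `C_c(G)`. -/
def IsCstarSeminorm {G : Type*} [GroupoidZ G] (N : (G →₀ ℂ) → ℝ) : Prop :=
  (∀ f, 0 ≤ N f) ∧ (∀ f g, N (f + g) ≤ N f + N g) ∧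
    (∀ (c : ℂ) (f), N (c • f) = ‖c‖ * N f) ∧
    (∀ f g, N (convF f g) ≤ N f * N g) ∧
    (∀ f, N (convF (starFsupp f) f) = N f ^ 2)

/-! ### Auxiliary groupoid lemmas -/

section GZ

variable {G : Type*} [GroupoidZ G]

open GroupoidZ

lemma gz_inv_ne {a : G} (h : a ≠ 0) : a⁻¹ ≠ 0 := fun h0 => h (by
  rw [← inv_inv' a, h0, inv_zero'])

lemma gz_ne_left {a b : G} (h : a * b ≠ 0) : a ≠ 0 := fun h' => h (by rw [h', zero_mul'])

lemma gz_ne_right {a b : G} (h : a * b ≠ 0) : b ≠ 0 := fun h' => h (by rw [h', mul_zero'])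

lemma gz_mul_inv_ne {a : G} (h : a ≠ 0) : a * a⁻¹ ≠ 0 := by
  rw [mul_ne_zero_iff' a a⁻¹ h (gz_inv_ne h), inv_inv']

lemma gz_inv_mul_ne {a : G} (h : a ≠ 0) : a⁻¹ * a ≠ 0 := by
  rw [mul_ne_zero_iff' a⁻¹ a (gz_inv_ne h) h, inv_inv']

lemma gz_imi (a : G) : a⁻¹ * a * a⁻¹ = a⁻¹ := by
  have := mul_inv_self_mul' (a := a⁻¹)
  rwa [inv_inv'] at this

lemma gz_source_mem {a : G} (h : a ≠ 0) : a⁻¹ * a ∈ unitSpace G := by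
  refine ⟨gz_inv_mul_ne h, ?_⟩
  have h1 : a⁻¹ * a * a⁻¹ = a⁻¹ := gz_imi a
  calc a⁻¹ * a * (a⁻¹ * a) = a⁻¹ * a * a⁻¹ * a := by
        rw [mul_assoc' (a⁻¹ * a) a⁻¹ a (by rw [h1]; exact gz_inv_ne h) (gz_inv_mul_ne h)]
    _ = a⁻¹ * a := by rw [h1]

lemma gz_range_mem {a : G} (h : a ≠ 0) : a * a⁻¹ ∈ unitSpace G := by
  have := gz_source_mem (gz_inv_ne h)
  rwa [inv_inv'] at this

lemma gz_range_mul {a b : G} (h : a * b ≠ 0) : (a * b) * (a * b)⁻¹ = a * a⁻¹ := by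
  have ha : a ≠ 0 := gz_ne_left h
  have hb : b ≠ 0 := gz_ne_right h
  have hcomp : a⁻¹ * a = b * b⁻¹ := (mul_ne_zero_iff' a b ha hb).mp h
  have h1 : b⁻¹ * a⁻¹ ≠ 0 := by rw [← mul_inv_rev']; exact gz_inv_ne h
  have h2 : b * (b⁻¹ * a⁻¹) = a⁻¹ := by
    calc b * (b⁻¹ * a⁻¹) = b * b⁻¹ * a⁻¹ := (mul_assoc' b b⁻¹ a⁻¹ (gz_mul_inv_ne hb) h1).symm
      _ = a⁻¹ * a * a⁻¹ := by rw [hcomp]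
      _ = a⁻¹ := gz_imi a
  calc (a * b) * (a * b)⁻¹ = (a * b) * (b⁻¹ * a⁻¹) := by rw [mul_inv_rev']
    _ = a * (b * (b⁻¹ * a⁻¹)) := mul_assoc' a b _ h (by rw [h2]; exact gz_inv_ne ha)
    _ = a * a⁻¹ := by rw [h2]

lemma gz_source_mul {a b : G} (h : a * b ≠ 0) : (a * b)⁻¹ * (a * b) = b⁻¹ * b := by
  have h1 : b⁻¹ * a⁻¹ ≠ 0 := by rw [← mul_inv_rev']; exact gz_inv_ne h
  have := gz_range_mul (a := b⁻¹) (b := a⁻¹) h1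
  rw [mul_inv_rev', inv_inv', inv_inv'] at this
  rw [mul_inv_rev']
  exact this

/-! ### The matrix units and the representation `Tmat` -/

/-- The matrix unit `E_{r(γ), s(γ)}`. -/
noncomputable def Egam (γ : G) : Matrix (unitSpace G) (unitSpace G) ℂ := fun i j =>
  if γ * γ⁻¹ = (i : G) ∧ γ⁻¹ * γ = (j : G) then 1 else 0

lemma Egam_zero : Egam (0 : G) = 0 := by
  funext i j
  have : (0 : G) * 0⁻¹ = 0 := by rw [zero_mul']
  exact if_neg (fun hcon => i.2.1 (hcon.1.symm.trans this))

lemma Tmat_eq (f : G →₀ ℂ) : Tmat f = Finsupp.linearCombination ℂ Egam f := by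
  funext i j
  rw [Finsupp.linearCombination_apply, Finsupp.sum, Matrix.sum_apply]
  unfold Tmat Egam
  refine Finset.sum_congr rfl fun γ _ => ?_
  show _ = f γ * (if γ * γ⁻¹ = (i : G) ∧ γ⁻¹ * γ = (j : G) then 1 else 0)
  split <;> simp

lemma Tmat_sum {ι : Type*} (s : Finset ι) (F : ι → (G →₀ ℂ)) :
    Tmat (∑ i ∈ s, F i) = ∑ i ∈ s, Tmat (F i) := by
  simp only [Tmat_eq]; exact map_sum _ _ _

lemma Tmat_add (f g : G →₀ ℂ) : Tmat (f + g) = Tmat f + Tmat g := by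
  simp only [Tmat_eq]; exact map_add _ _ _

lemma Tmat_sub (f g : G →₀ ℂ) : Tmat (f - g) = Tmat f - Tmat g := by
  simp only [Tmat_eq]; exact map_sub _ _ _

lemma Tmat_smul (c : ℂ) (f : G →₀ ℂ) : Tmat (c • f) = c • Tmat f := by
  simp only [Tmat_eq]; exact map_smul _ _ _

lemma Tmat_zero : Tmat (0 : G →₀ ℂ) = 0 := by
  simp only [Tmat_eq]; exact map_zero _

lemma Tmat_single (γ : G) (c : ℂ) : Tmat (Finsupp.single γ c) = c • Egam γ := by
  rw [Tmat_eq, Finsupp.linearCombination_single]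

lemma Tmat_eq_sum (f : G →₀ ℂ) : Tmat f = ∑ γ ∈ f.support, f γ • Egam γ := by
  rw [Tmat_eq, Finsupp.linearCombination_apply, Finsupp.sum]

lemma Egam_star (γ : G) : star (Egam γ) = Egam γ⁻¹ := by
  funext i j
  rw [Matrix.star_apply]
  unfold Egam
  rw [GroupoidZ.inv_inv']
  by_cases h1 : γ * γ⁻¹ = (j : G) <;> by_cases h2 : γ⁻¹ * γ = (i : G) <;>
    simp [h1, h2, and_comm]

variable [Fintype (unitSpace G)]

lemma Egam_mul (a b : G) :
    Egam a * Egam b = if a * b ≠ 0 then Egam (a * b) else 0 := by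
  by_cases ha : a = 0
  · subst ha
    rw [Egam_zero, Matrix.zero_mul, if_neg]
    simp [GroupoidZ.zero_mul']
  by_cases hb : b = 0
  · subst hb
    rw [Egam_zero, Matrix.mul_zero, if_neg]
    simp [GroupoidZ.mul_zero']
  funext i j
  rw [Matrix.mul_apply]
  by_cases hab : a * b = 0
  · rw [if_neg (by simpa using hab), Matrix.zero_apply]
    refine Finset.sum_eq_zero fun k _ => ?_
    unfold Egam
    by_cases h1 : a * a⁻¹ = (i : G) ∧ a⁻¹ * a = (k : G)
    · rw [if_pos h1, if_neg, mul_zero]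
      rintro ⟨hbk, -⟩
      exact ((GroupoidZ.mul_ne_zero_iff' a b ha hb).mpr (h1.2.trans hbk.symm)) hab
    · rw [if_neg h1, zero_mul]
  · have hsa : a⁻¹ * a ∈ unitSpace G := gz_source_mem ha
    have hcomp : a⁻¹ * a = b * b⁻¹ := (GroupoidZ.mul_ne_zero_iff' a b ha hb).mp hab
    rw [if_pos hab]
    rw [Finset.sum_eq_single (⟨a⁻¹ * a, hsa⟩ : ↥(unitSpace G))]
    · unfold Egam
      rw [gz_range_mul hab, gz_source_mul hab]
      by_cases h1 : a * a⁻¹ = (i : G) <;> by_cases h2 : b⁻¹ * b = (j : G) <;>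
        simp [h1, h2, ← hcomp]
    · intro k _ hk
      unfold Egam
      rcases eq_or_ne ((k : G)) (a⁻¹ * a) with hk' | hk'
      · exact absurd (Subtype.ext hk') hk
      · rw [if_neg (fun hcon => hk' hcon.2.symm), zero_mul]
    · intro h; exact absurd (Finset.mem_univ _) h

lemma Tmat_conv (f g : G →₀ ℂ) : Tmat (convF f g) = Tmat f * Tmat g := by
  unfold convF
  rw [Finsupp.sum, Tmat_sum]
  have : ∀ a : G, Tmat (g.sum fun b cb =>
      if a * b ≠ 0 then Finsupp.single (a * b) (f a * cb) else 0) =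
      ∑ b ∈ g.support, if a * b ≠ 0 then (f a * g b) • Egam (a * b) else 0 := by
    intro a
    rw [Finsupp.sum, Tmat_sum]
    refine Finset.sum_congr rfl fun b _ => ?_
    split
    · rw [Tmat_single]
    · rw [Tmat_zero]
  simp only [this]
  rw [Tmat_eq_sum f, Tmat_eq_sum g, Finset.sum_mul_sum]
  refine Finset.sum_congr rfl fun a _ => Finset.sum_congr rfl fun b _ => ?_
  rw [smul_mul_assoc, mul_smul_comm, smul_smul, Egam_mul]
  split <;> simp

lemma Tmat_star (f : G →₀ ℂ) : Tmat (starFsupp f) = star (Tmat f) := by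
  unfold starFsupp
  rw [Finsupp.sum, Tmat_sum, Tmat_eq_sum f, star_sum]
  refine Finset.sum_congr rfl fun a _ => ?_
  rw [Tmat_single, star_smul, Egam_star, starRingEnd_apply]

/-! ### The C*-seminorm coming from `Tmat` -/

/-- The operator-norm seminorm induced by `Tmat`. -/
noncomputable def Mnorm (f : G →₀ ℂ) : ℝ :=
  ‖Matrix.toEuclideanCLM (𝕜 := ℂ) (Tmat f)‖

lemma Mnorm_cstar : IsCstarSeminorm (Mnorm (G := G)) := by
  refine ⟨fun f => norm_nonneg _, ?_, ?_, ?_, ?_⟩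
  · intro f g
    unfold Mnorm
    rw [Tmat_add, map_add]
    exact norm_add_le _ _
  · intro c f
    unfold Mnorm
    rw [Tmat_smul, map_smul]
    exact norm_smul c (Matrix.toEuclideanCLM (𝕜 := ℂ) (Tmat f))
  · intro f g
    unfold Mnorm
    rw [Tmat_conv, map_mul]
    exact norm_mul_le _ _
  · intro f
    unfold Mnorm
    rw [Tmat_conv, Tmat_star, map_mul, map_star, sq,
      ContinuousLinearMap.star_eq_adjoint]
    exact ContinuousLinearMap.norm_adjoint_comp_self _

/-! ### The row-sum functional -/

lemma euclid_coord_le {ι : Type*} [Fintype ι] (x : EuclideanSpace ℂ ι) (i : ι) :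
    ‖x i‖ ≤ ‖x‖ := by
  rw [EuclideanSpace.norm_eq]
  have h1 : ‖x i‖ ^ 2 ≤ ∑ j, ‖x j‖ ^ 2 :=
    Finset.single_le_sum (f := fun j => ‖x j‖ ^ 2) (fun j _ => sq_nonneg _) (Finset.mem_univ i)
  calc ‖x i‖ = Real.sqrt (‖x i‖ ^ 2) := (Real.sqrt_sq (norm_nonneg _)).symm
    _ ≤ _ := Real.sqrt_le_sqrt h1

lemma rowdiff_bound (hn : (1 : ℝ) ≤ (Fintype.card (unitSpace G) : ℝ))
    (A : Matrix (unitSpace G) (unitSpace G) ℂ) (i₀ i₁ : ↥(unitSpace G)) :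
    ‖(∑ j, A i₀ j) - (∑ j, A i₁ j)‖ ≤
      2 * (Fintype.card (unitSpace G) : ℝ) * ‖Matrix.toEuclideanCLM (𝕜 := ℂ) A‖ := by
  set n : ℝ := (Fintype.card (unitSpace G) : ℝ) with hndef
  set v : EuclideanSpace ℂ (unitSpace G) := (WithLp.equiv 2 _).symm (fun _ => 1) with hvdef
  have hv : ∀ i, (Matrix.toEuclideanCLM (𝕜 := ℂ) A v) i = ∑ j, A i j := by
    intro i
    rw [hvdef, WithLp.equiv_symm_apply, Matrix.toEuclideanCLM_toLp]
    show (Matrix.toLin' A fun _ => (1 : ℂ)) i = _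
    rw [Matrix.toLin'_apply]
    simp [Matrix.mulVec, dotProduct]
  have hvn : ‖v‖ ≤ n := by
    have hv1 : ∀ i, ‖v i‖ = 1 := fun i => by
      show ‖(1 : ℂ)‖ = 1
      exact norm_one
    rw [EuclideanSpace.norm_eq]
    have : ∑ i, ‖v i‖ ^ 2 = n := by
      simp [hv1, hndef]
    rw [this]
    calc Real.sqrt n ≤ Real.sqrt (n ^ 2) := Real.sqrt_le_sqrt (by nlinarith)
      _ = n := Real.sqrt_sq (by linarith)
  have hAv : ∀ i, ‖(∑ j, A i j : ℂ)‖ ≤ ‖Matrix.toEuclideanCLM (𝕜 := ℂ) A‖ * ‖v‖ := by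
    intro i
    rw [← hv i]
    exact (euclid_coord_le _ i).trans (ContinuousLinearMap.le_opNorm _ _)
  have hopn : (0 : ℝ) ≤ ‖Matrix.toEuclideanCLM (𝕜 := ℂ) A‖ := norm_nonneg _
  calc ‖(∑ j, A i₀ j) - (∑ j, A i₁ j)‖ ≤ ‖(∑ j, A i₀ j : ℂ)‖ + ‖(∑ j, A i₁ j : ℂ)‖ :=
        norm_sub_le _ _
    _ ≤ ‖Matrix.toEuclideanCLM (𝕜 := ℂ) A‖ * ‖v‖ + ‖Matrix.toEuclideanCLM (𝕜 := ℂ) A‖ * ‖v‖ :=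
        add_le_add (hAv i₀) (hAv i₁)
    _ ≤ 2 * n * ‖Matrix.toEuclideanCLM (𝕜 := ℂ) A‖ := by nlinarith [norm_nonneg v]

lemma Egam_rowsum {γ : G} (hγ : γ ≠ 0) (i : ↥(unitSpace G)) :
    (∑ j, Egam γ i j) = if γ * γ⁻¹ = (i : G) then (1 : ℂ) else 0 := by
  rw [Finset.sum_eq_single (⟨γ⁻¹ * γ, gz_source_mem hγ⟩ : ↥(unitSpace G))]
  · unfold Egam
    by_cases h : γ * γ⁻¹ = (i : G) <;> simp [h]
  · intro j _ hj
    unfold Egam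
    exact if_neg (fun hcon => hj (Subtype.ext hcon.2.symm))
  · intro h; exact absurd (Finset.mem_univ _) h

/-- The row-sum functional at a unit. -/
noncomputable def rowFun (i : ↥(unitSpace G)) : (G →₀ ℂ) →ₗ[ℂ] ℂ where
  toFun f := ∑ j, Tmat f i j
  map_add' f g := show (∑ j, Tmat (f + g) i j) = (∑ j, Tmat f i j) + (∑ j, Tmat g i j) by
    rw [Tmat_add]
    simp [Matrix.add_apply, Finset.sum_add_distrib]
  map_smul' c f :=
    show (∑ j, Tmat (c • f) i j) = RingHom.id ℂ c • (∑ j, Tmat f i j) by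
      rw [Tmat_smul]
      simp [Matrix.smul_apply, Finset.mul_sum]

lemma rowFun_indicator {B : Finset G} (hB : IsBisection (B : Set G))
    (hF : IsFull (B : Set G)) (i : ↥(unitSpace G)) :
    rowFun i (∑ γ ∈ B, Finsupp.single γ (1 : ℂ)) = 1 := by
  show (∑ j, Tmat (∑ γ ∈ B, Finsupp.single γ (1 : ℂ)) i j) = 1
  rw [Tmat_sum]
  simp only [Tmat_single, one_smul]
  rw [show (∑ j, (∑ γ ∈ B, Egam γ) i j) = ∑ γ ∈ B, ∑ j, Egam γ i j by
    rw [Finset.sum_comm]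
    exact Finset.sum_congr rfl fun j _ => by rw [Matrix.sum_apply]]
  obtain ⟨γ₀, hγ₀B, hγ₀⟩ : ∃ γ₀ ∈ B, γ₀ * γ₀⁻¹ = (i : G) := by
    have hi : (i : G) ∈ (fun a => a * a⁻¹) '' (B : Set G) := by
      rw [hF.1]; exact i.2
    obtain ⟨γ₀, hmem, heq⟩ := hi
    exact ⟨γ₀, hmem, heq⟩
  have hne0 : ∀ γ ∈ B, γ ≠ 0 := fun γ hγ h0 => hB.1 (h0 ▸ hγ)
  rw [Finset.sum_eq_single γ₀]
  · rw [Egam_rowsum (hne0 γ₀ hγ₀B), if_pos hγ₀]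
  · intro γ hγB hne
    rw [Egam_rowsum (hne0 γ hγB), if_neg]
    intro hcon
    exact hne (hB.2.1 γ hγB γ₀ hγ₀B (hcon.trans hγ₀.symm))
  · intro h; exact absurd hγ₀B h

lemma rowFun_span_eq {i₀ i₁ : ↥(unitSpace G)} {φ : G →₀ ℂ} (hφ : φ ∈ spanFullD G) :
    rowFun i₀ φ = rowFun i₁ φ := by
  have : spanFullD G ≤ LinearMap.ker (rowFun i₀ - rowFun i₁) := by
    rw [spanFullD, Submodule.span_le]
    rintro f ⟨B, hB, hF, rfl⟩
    simp only [SetLike.mem_coe, LinearMap.mem_ker, LinearMap.sub_apply]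
    rw [rowFun_indicator hB hF, rowFun_indicator hB hF, sub_self]
  have h := this hφ
  rw [LinearMap.mem_ker, LinearMap.sub_apply, sub_eq_zero] at h
  exact h

lemma rowFun_single {γ : G} (hγ : γ ≠ 0) (i : ↥(unitSpace G)) :
    rowFun i (Finsupp.single γ (1 : ℂ)) = if γ * γ⁻¹ = (i : G) then (1 : ℂ) else 0 := by
  show (∑ j, Tmat (Finsupp.single γ (1 : ℂ)) i j) = _
  simp only [Tmat_single, one_smul]
  exact Egam_rowsum hγ i

end GZ

/-- Let `G` be a discrete groupoid with finite unit space that is not a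
group (at least `2` units), and let `N` be the full C*-norm on `C_c(G)`, i.e. the maximal
C*-seminorm.  Then for every groupoid element `γ`, the point mass `1_γ` is not in the
closure of `π(ℂF(G))` with respect to `N`; consequently, the closure of `π(ℂF(G))` in
`C*(G)` is proper. -/
theorem pointMass_not_in_closure {G : Type*} [GroupoidZ G] [Fintype (unitSpace G)]
    (hcard : 2 ≤ Fintype.card (unitSpace G))
    (N : (G →₀ ℂ) → ℝ) (hN : IsCstarSeminorm N)
    (hmax : ∀ M : (G →₀ ℂ) → ℝ, IsCstarSeminorm M → ∀ f, M f ≤ N f) :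
    (∀ γ : G, γ ≠ 0 → ∃ ε > (0 : ℝ), ∀ φ ∈ spanFullD G,
      ε ≤ N (Finsupp.single γ 1 - φ)) ∧
    ¬ (∀ f : G →₀ ℂ, f 0 = 0 → ∀ ε > (0 : ℝ), ∃ φ ∈ spanFullD G, N (f - φ) < ε) := by
  set n : ℝ := (Fintype.card (unitSpace G) : ℝ) with hndef
  have hn1 : (1 : ℝ) ≤ n := by
    rw [hndef]; exact_mod_cast le_trans (by norm_num) hcard
  have hnpos : (0 : ℝ) < 2 * n := by linarith
  have key : ∀ γ : G, γ ≠ 0 → ∀ φ ∈ spanFullD G,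
      1 / (2 * n) ≤ N (Finsupp.single γ 1 - φ) := by
    intro γ hγ φ hφ
    set i₀ : ↥(unitSpace G) := ⟨γ * γ⁻¹, gz_range_mem hγ⟩ with hi₀def
    obtain ⟨i₁, hi₁⟩ :=
      Fintype.exists_ne_of_one_lt_card (lt_of_lt_of_le one_lt_two hcard) i₀
    set f := Finsupp.single γ (1 : ℂ) - φ with hfdef
    have hval : rowFun i₀ f - rowFun i₁ f = 1 := by
      rw [hfdef, map_sub, map_sub, rowFun_span_eq (i₀ := i₀) (i₁ := i₁) hφ,
        rowFun_single hγ, rowFun_single hγ]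
      rw [if_pos (show γ * γ⁻¹ = (i₀ : G) from rfl)]
      rw [if_neg (fun hcon => hi₁ (Subtype.ext hcon.symm))]
      ring
    have hbound : (1 : ℝ) ≤ 2 * n * Mnorm f := by
      have h1 : ‖rowFun i₀ f - rowFun i₁ f‖ = 1 := by rw [hval, norm_one]
      have h2 : ‖(∑ j, Tmat f i₀ j) - (∑ j, Tmat f i₁ j)‖ ≤ 2 * n * Mnorm f :=
        rowdiff_bound hn1 (Tmat f) i₀ i₁
      have h3 : rowFun i₀ f = ∑ j, Tmat f i₀ j := rfl
      have h4 : rowFun i₁ f = ∑ j, Tmat f i₁ j := rfl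
      rw [h3, h4] at h1
      linarith [h2, h1.symm.le, h1.le]
    have hMN : Mnorm f ≤ N f := hmax _ Mnorm_cstar f
    rw [div_le_iff₀ hnpos]
    calc (1 : ℝ) ≤ 2 * n * Mnorm f := hbound
      _ ≤ 2 * n * N f := by nlinarith
      _ = N f * (2 * n) := by ring
  constructor
  · intro γ hγ
    exact ⟨1 / (2 * n), by positivity, key γ hγ⟩
  · intro hcontra
    have hpos : 0 < Fintype.card (unitSpace G) := by omega
    obtain ⟨e⟩ := Fintype.card_pos_iff.mp hpos
    have he : (e : G) ≠ 0 := e.2.1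
    have hf0 : (Finsupp.single (e : G) (1 : ℂ)) 0 = 0 :=
      Finsupp.single_eq_of_ne' he
    obtain ⟨φ, hφ, hlt⟩ := hcontra _ hf0 (1 / (2 * n)) (by positivity)
    exact absurd hlt (not_lt.mpr (key (e : G) he φ hφ))
end
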